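/- arXiv:1112.1228 — 3 statements merged into one kernel-verified Lean document; each statement's English description precedes it below -/
import Mathlib

section
/- Let p be a prime and n ≥ 1. The number of polynomial functions on ℤ/p^nℤ is |F_n| = p^{Σ_{k=1}^n β_p(k)}. -/
/-- `α_p(n)`: the `p`-adic valuation of `n!`. -/
def alphaP (p n : ℕ) : ℕ := padicValNat p (Nat.factorial n)

/-- `β_p(n)`: the least `m` with `α_p(m) ≥ n`. -/
noncomputable def betaP (p n : ℕ) : ℕ := sInf {m | n ≤ alphaP p m}

/-!
Every integer polynomial is an integer combination of the falling factorials
`(x)_k = x (x - 1) ⋯ (x - k + 1)`, and `(x)_k` vanishes on `ℤ/p^nℤ` as soon as `p^n ∣ k!`,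
i.e. `k ≥ β_p(n)`. So the polynomial functions are the image of `c ↦ ∑_{k < β_p(n)} c_k (x)_k`
on `(ℤ/p^nℤ)^{β_p(n)}`. Evaluating at `x = 0, 1, 2, …` in turn shows that its kernel is
`{c | k! c_k = 0}`, so the image has `∏_{k < β_p(n)} p^{n - α_p(k)}` elements. Finally both
`∑_{k < β_p(n)} (n - α_p(k))` and `∑_{j=1}^n β_p(j)` count the pairs `(k, j)` with
`α_p(k) < j ≤ n`.
-/

open Polynomial Finset
open scoped Nat

section Legendre

variable {p : ℕ} [Fact p.Prime]

theorem monotone_alphaP : Monotone (alphaP p) := fun _ b hab =>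
  (padicValNat_dvd_iff_le (Nat.factorial_ne_zero b)).mp
    (pow_padicValNat_dvd.trans (Nat.factorial_dvd_factorial hab))

theorem le_alphaP_mul (n : ℕ) : n ≤ alphaP p (p * n) := by
  simp [alphaP, padicValNat_factorial_mul]

theorem gc_betaP_alphaP : GaloisConnection (betaP p) (alphaP p) := fun n _ =>
  ⟨fun h => (Nat.sInf_mem (s := {m | n ≤ alphaP p m}) ⟨p * n, le_alphaP_mul n⟩).trans
      (monotone_alphaP h),
    fun h => Nat.sInf_le h⟩

theorem pow_dvd_factorial_betaP (n : ℕ) : p ^ n ∣ (betaP p n)! :=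
  (padicValNat_dvd_iff_le (Nat.factorial_ne_zero _)).mpr (gc_betaP_alphaP.le_u_l n)

theorem sum_betaP_eq_sum_sub_alphaP (n : ℕ) :
    ∑ j ∈ Icc 1 n, betaP p j = ∑ k ∈ range (betaP p n), (n - alphaP p k) := by
  have hbelow : ∀ j ∈ Icc 1 n,
      #((range (betaP p n)).bipartiteBelow (fun k j => alphaP p k < j) j) = betaP p j := by
    intro j hj
    have hle : betaP p j ≤ betaP p n := gc_betaP_alphaP.monotone_l (mem_Icc.mp hj).2
    rw [bipartiteBelow, ← card_range (betaP p j)]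
    congr 1
    ext k
    simp only [mem_filter, mem_range, ← gc_betaP_alphaP.lt_iff_lt]
    omega
  have habove : ∀ k ∈ range (betaP p n),
      #((Icc 1 n).bipartiteAbove (fun k j => alphaP p k < j) k) = n - alphaP p k := by
    intro k _
    rw [bipartiteAbove, ← Nat.card_Ioc (alphaP p k) n]
    congr 1
    ext j
    simp only [mem_filter, mem_Icc, mem_Ioc]
    omega
  rw [← sum_congr rfl hbelow, ← sum_congr rfl habove,
    sum_card_bipartiteAbove_eq_sum_card_bipartiteBelow]

theorem gcd_pow_eq_pow_min_padicValNat (n : ℕ) {m : ℕ} (hm : m ≠ 0) :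
    (p ^ n).gcd m = p ^ min n (padicValNat p m) := by
  obtain ⟨j, hj, he⟩ := (Nat.dvd_prime_pow Fact.out).mp (Nat.gcd_dvd_left (p ^ n) m)
  have hjm : j ≤ padicValNat p m :=
    (padicValNat_dvd_iff_le hm).mp (he ▸ Nat.gcd_dvd_right _ _)
  refine Nat.dvd_antisymm (he ▸ pow_dvd_pow p (le_min hj hjm)) (Nat.dvd_gcd ?_ ?_)
  · exact pow_dvd_pow p (min_le_left _ _)
  · exact (pow_dvd_pow p (min_le_right _ _)).trans pow_padicValNat_dvd

end Legendre

theorem span_range_descPochhammer (R : Type*) [CommRing R] :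
    Submodule.span R (Set.range (descPochhammer R)) = ⊤ := by
  set M := Submodule.span R (Set.range (descPochhammer R))
  have hX : ∀ f ∈ M, X * f ∈ M := by
    intro f hf
    induction hf using Submodule.span_induction with
    | mem f hf =>
      obtain ⟨k, rfl⟩ := hf
      have : X * descPochhammer R k =
          descPochhammer R (k + 1) + (k : R) • descPochhammer R k := by
        rw [descPochhammer_succ_right, smul_eq_C_mul, map_natCast]; ring
      rw [this]
      exact M.add_mem (Submodule.subset_span ⟨k + 1, rfl⟩)
        (M.smul_mem _ (Submodule.subset_span ⟨k, rfl⟩))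
    | zero => simp
    | add f g _ _ hf hg => simpa [mul_add] using M.add_mem hf hg
    | smul a f _ hf => simpa [mul_smul_comm] using M.smul_mem a hf
  refine Submodule.eq_top_iff'.mpr fun f => ?_
  induction f using Polynomial.induction_on' with
  | add f g hf hg => exact M.add_mem hf hg
  | monomial k a =>
    induction k with
    | zero =>
      rw [← C_mul_X_pow_eq_monomial, pow_zero, mul_one, ← mul_one (C a), ← smul_eq_C_mul]
      exact M.smul_mem a (Submodule.subset_span ⟨0, descPochhammer_zero R⟩)
    | succ k ih =>
      rw [← C_mul_X_pow_eq_monomial] at ih ⊢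
      rw [pow_succ', mul_left_comm]
      exact hX _ ih

section PolynomialFunctions

variable (N : ℕ)

noncomputable def polyFun : ℤ[X] →+* (ZMod N → ZMod N) :=
  RingHom.pi fun x => (aeval x).toRingHom

@[simp]
theorem polyFun_apply (f : ℤ[X]) (x : ZMod N) : polyFun N f x = aeval x f := rfl

theorem polyFun_descPochhammer_natCast (k v : ℕ) :
    polyFun N (descPochhammer ℤ k) v = v.descFactorial k := by
  simp [aeval_def, eval₂_at_natCast, descPochhammer_eval_eq_descFactorial]

theorem polyFun_descPochhammer_eq_zero [NeZero N] {k : ℕ} (h : N ∣ k !) :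
    polyFun N (descPochhammer ℤ k) = 0 := by
  funext x
  rw [← ZMod.natCast_zmod_val x, polyFun_descPochhammer_natCast, Pi.zero_apply,
    ZMod.natCast_eq_zero_iff]
  exact h.trans (Nat.factorial_dvd_descFactorial _ _)

noncomputable def descPochhammerCombination (B : ℕ) : (Fin B → ZMod N) →+ (ZMod N → ZMod N) where
  toFun c := ∑ k, c k • polyFun N (descPochhammer ℤ k)
  map_zero' := by simp
  map_add' c d := by simp [add_smul, sum_add_distrib]

variable {N}

theorem descPochhammerCombination_apply_natCast {B : ℕ} (c : Fin B → ZMod N) (v : ℕ) :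
    descPochhammerCombination N B c v = ∑ k : Fin B, v.descFactorial k • c k := by
  simp only [descPochhammerCombination, AddMonoidHom.coe_mk, ZeroHom.coe_mk, Finset.sum_apply,
    Pi.smul_apply, polyFun_descPochhammer_natCast, smul_eq_mul, nsmul_eq_mul, mul_comm]

variable [NeZero N]

theorem descPochhammerCombination_eq_zero_iff {B : ℕ} (c : Fin B → ZMod N) :
    descPochhammerCombination N B c = 0 ↔ ∀ k : Fin B, (k : ℕ)! • c k = 0 := by
  have hdesc (k : Fin B) (v : ℕ) (hk : (k : ℕ)! • c k = 0) : v.descFactorial k • c k = 0 := by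
    obtain ⟨m, hm⟩ := Nat.factorial_dvd_descFactorial v k
    rw [hm, mul_nsmul, hk, nsmul_zero]
  refine ⟨fun h k => ?_, fun h => funext fun x => ?_⟩
  · induction k using WellFoundedLT.induction with
    | ind k ih =>
      have hk := congr_fun h (k : ℕ)
      rw [descPochhammerCombination_apply_natCast, Pi.zero_apply,
        sum_eq_single k (fun j _ hjk => ?_) (by simp)] at hk
      · rwa [Nat.descFactorial_self] at hk
      rcases lt_or_gt_of_ne hjk with hjk | hjk
      · exact hdesc j k (ih j hjk)
      · rw [Nat.descFactorial_eq_zero_iff_lt.mpr hjk, zero_nsmul]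
  · rw [← ZMod.natCast_zmod_val x, descPochhammerCombination_apply_natCast]
    exact sum_eq_zero fun k _ => hdesc k _ (h k)

theorem card_ker_descPochhammerCombination (B : ℕ) :
    Nat.card (descPochhammerCombination N B).ker = ∏ k : Fin B, N.gcd (k : ℕ)! := by
  calc Nat.card (descPochhammerCombination N B).ker
      = Nat.card (∀ k : Fin B, (nsmulAddMonoidHom (α := ZMod N) (k : ℕ)!).ker) :=
        Nat.card_congr <| (Equiv.subtypeEquivRight fun c => by
          rw [AddMonoidHom.mem_ker, descPochhammerCombination_eq_zero_iff]
          rfl).trans Equiv.subtypePiEquivPi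
    _ = ∏ k : Fin B, N.gcd (k : ℕ)! := by
      simp only [Nat.card_pi, IsAddCyclic.card_nsmulAddMonoidHom_ker, Nat.card_zmod]

theorem card_range_descPochhammerCombination (B : ℕ) :
    Nat.card (descPochhammerCombination N B).range = ∏ k : Fin B, N / N.gcd (k : ℕ)! := by
  have h := (descPochhammerCombination N B).ker.card_mul_index
  rw [AddSubgroup.index_ker, card_ker_descPochhammerCombination, Nat.card_pi,
    Nat.card_zmod] at h
  have hgcd : ∏ k : Fin B, N.gcd (k : ℕ)! ≠ 0 :=
    prod_ne_zero_iff.mpr fun _ _ => (Nat.gcd_pos_of_pos_left _ (NeZero.pos N)).ne'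
  refine mul_left_cancel₀ hgcd ?_
  rw [h, ← prod_mul_distrib]
  exact prod_congr rfl fun _ _ => (Nat.mul_div_cancel' (Nat.gcd_dvd_left _ _)).symm

theorem range_polyFun {B : ℕ} (hB : N ∣ B !) :
    Set.range (polyFun N) = Set.range (descPochhammerCombination N B) := by
  apply Set.Subset.antisymm
  · rintro _ ⟨f, rfl⟩
    have hgen : Submodule.span ℤ (Set.range (descPochhammer ℤ)) ≤
        ((descPochhammerCombination N B).range.comap
          (polyFun N).toAddMonoidHom).toIntSubmodule := by
      rw [Submodule.span_le]
      rintro _ ⟨k, rfl⟩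
      show polyFun N (descPochhammer ℤ k) ∈ (descPochhammerCombination N B).range
      by_cases hk : k < B
      · exact ⟨Pi.single ⟨k, hk⟩ 1, by simp [descPochhammerCombination, Pi.single_apply]⟩
      · have hk : N ∣ k ! := hB.trans (Nat.factorial_dvd_factorial (not_lt.mp hk))
        rw [polyFun_descPochhammer_eq_zero N hk]
        exact zero_mem _
    exact hgen (span_range_descPochhammer ℤ ▸ Submodule.mem_top)
  · rintro _ ⟨c, rfl⟩
    show ∑ k, c k • polyFun N (descPochhammer ℤ k) ∈ (polyFun N).range
    refine sum_mem fun k _ => ?_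
    have : c k • polyFun N (descPochhammer ℤ k) =
        polyFun N ((c k).val : ℤ[X]) * polyFun N (descPochhammer ℤ k) := by
      rw [map_natCast]
      funext x
      simp only [Pi.smul_apply, Pi.mul_apply, Pi.natCast_apply, ZMod.natCast_zmod_val, smul_eq_mul]
    rw [this]
    exact mul_mem ⟨_, rfl⟩ ⟨_, rfl⟩

end PolynomialFunctions

theorem card_polynomial_functions_general (p : ℕ) (hp : p.Prime) (n : ℕ) :
    Nat.card {g : ZMod (p ^ n) → ZMod (p ^ n) //
        ∃ f : Polynomial ℤ, g = fun x => Polynomial.aeval x f} =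
      p ^ (∑ k ∈ Finset.Icc 1 n, betaP p k) := by
  have : Fact p.Prime := ⟨hp⟩
  calc _ = Nat.card (Set.range (polyFun (p ^ n))) :=
        Nat.card_congr <| Equiv.subtypeEquivRight fun g => by simp [eq_comm, funext_iff]
    _ = Nat.card (descPochhammerCombination (p ^ n) (betaP p n)).range := by
        rw [range_polyFun (pow_dvd_factorial_betaP n), ← AddMonoidHom.coe_range]
        rfl
    _ = ∏ k : Fin (betaP p n), p ^ (n - alphaP p k) := by
        rw [card_range_descPochhammerCombination]
        refine prod_congr rfl fun k _ => ?_
        rw [alphaP, gcd_pow_eq_pow_min_padicValNat n (Nat.factorial_ne_zero _),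
          Nat.pow_div (min_le_left _ _) hp.pos, tsub_min]
    _ = p ^ (∑ k ∈ Finset.Icc 1 n, betaP p k) := by
        rw [prod_pow_eq_pow_sum, Fin.sum_univ_eq_sum_range (fun k => n - alphaP p k),
          sum_betaP_eq_sum_sub_alphaP]

/-- The number of polynomial functions on `ℤ/p^nℤ` is `p^{Σ_{k=1}^n β_p(k)}`. -/
theorem card_polynomial_functions (p : ℕ) (hp : p.Prime) (n : ℕ) (hn : 1 ≤ n) :
    Nat.card {g : ZMod (p ^ n) → ZMod (p ^ n) //
        ∃ f : Polynomial ℤ, g = fun x => Polynomial.aeval x f} =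
      p ^ (∑ k ∈ Finset.Icc 1 n, betaP p k) :=
  card_polynomial_functions_general p hp n
end

section
/- Let p be a prime and n ≥ 2. The kernel of the canonical group epimorphism π_n : G_{n+1} → G_n has order p^{β_p(n+1)}. -/
/-!
The kernel of `π_n` consists of the functions induced by `f = X + g` with `g` vanishing
modulo `p^n` on `ℤ`. Writing `g = ∑ a_k (X)_k` in the falling factorial basis, `g` vanishes
modulo `p^n` iff `p^(n - α_p(k)) ∣ a_k` for every `k` (evaluate at `0, 1, 2, …` in turn, using
`k! ∣ (m)_k`). Since `p^(α_p(k)) ∣ (m)_k`, the terms with `α_p(k) > n` vanish modulo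
`p^(n+1)`, so modulo `p^(n+1)` the function of `g` is that of
`∑_{k < β_p(n+1)} c_k p^(n - α_p(k)) (X)_k` for a unique `c ∈ (ℤ/pℤ)^β_p(n+1)`.
Conversely every such `f` permutes `ℤ/p^(n+1)ℤ`: for `n ≥ 2` we have `β_p(n+1) ≤ p^n`, and
Lucas' theorem gives `(x + t p^n)_k ≡ (x)_k` modulo `p^(α_p(k)+1)` for `k < p^n`, whence
`f(x + t p^n) ≡ f(x) + t p^n` modulo `p^(n+1)`.
-/

open Polynomial Finset Function

variable {p : ℕ}

theorem alphaP_mono (hp : p.Prime) : Monotone (alphaP p) := by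
  have : Fact p.Prime := ⟨hp⟩
  intro k m hkm
  exact (padicValNat_dvd_iff_le m.factorial_ne_zero).mp
    (pow_padicValNat_dvd.trans (Nat.factorial_dvd_factorial hkm))

theorem le_alphaP_pow (hp : p.Prime) (n : ℕ) : n ≤ alphaP p (p ^ n) :=
  have : Fact p.Prime := ⟨hp⟩
  (padicValNat_dvd_iff_le (Nat.factorial_ne_zero _)).mp
    (Nat.dvd_factorial (pow_pos hp.pos n) le_rfl)

theorem betaP_le_iff (hp : p.Prime) {n k : ℕ} : betaP p n ≤ k ↔ n ≤ alphaP p k :=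
  ⟨fun h => (Nat.sInf_mem (s := {m | n ≤ alphaP p m}) ⟨p ^ n, le_alphaP_pow hp n⟩).trans
      (alphaP_mono hp h),
    fun h => Nat.sInf_le h⟩

theorem betaP_succ_le_pow (hp : p.Prime) {n : ℕ} (hn : 2 ≤ n) : betaP p (n + 1) ≤ p ^ n := by
  have : Fact p.Prime := ⟨hp⟩
  obtain ⟨m, rfl⟩ : ∃ m, n = m + 1 := ⟨n - 1, by omega⟩
  have hpm : 2 ≤ p ^ m := le_trans hp.two_le (Nat.le_self_pow (by omega) p)
  rw [betaP_le_iff hp, alphaP, pow_succ', padicValNat_factorial_mul]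
  have : m ≤ padicValNat p (p ^ m).factorial := le_alphaP_pow hp m
  omega

theorem pow_alphaP_dvd_factorial (p k : ℕ) : (p : ℤ) ^ alphaP p k ∣ (k.factorial : ℤ) := by
  exact_mod_cast (pow_padicValNat_dvd : p ^ alphaP p k ∣ k.factorial)

theorem pow_alphaP_dvd_descFactorial (p m k : ℕ) :
    (p : ℤ) ^ alphaP p k ∣ (m.descFactorial k : ℤ) :=
  (pow_alphaP_dvd_factorial p k).trans (by exact_mod_cast Nat.factorial_dvd_descFactorial m k)

theorem choose_add_mul_pow_modEq [Fact p.Prime] {a k : ℕ} (hk : k < p ^ a) (x t : ℕ) :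
    (x + t * p ^ a).choose k ≡ x.choose k [MOD p] := by
  induction a generalizing x k with
  | zero => simp_all [Nat.ModEq]
  | succ a ih =>
    have hp0 : 0 < p := (Fact.out : p.Prime).pos
    have hmod : (x + t * p ^ a * p) % p = x % p := by simp
    have hdiv : (x + t * p ^ a * p) / p = x / p + t * p ^ a := by
      rw [Nat.add_mul_div_right _ _ hp0]
    have hk' : k / p < p ^ a := Nat.div_lt_of_lt_mul (by rwa [mul_comm, ← pow_succ])
    calc (x + t * p ^ (a + 1)).choose k
        ≡ (x % p).choose (k % p) * (x / p + t * p ^ a).choose (k / p) [MOD p] := by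
          rw [pow_succ, ← mul_assoc, ← hmod, ← hdiv]
          exact Choose.choose_modEq_choose_mod_mul_choose_div_nat
      _ ≡ (x % p).choose (k % p) * (x / p).choose (k / p) [MOD p] :=
          Nat.ModEq.mul_left _ (ih hk' _)
      _ ≡ x.choose k [MOD p] := Choose.choose_modEq_choose_mod_mul_choose_div_nat.symm

theorem pow_alphaP_succ_dvd_descFactorial_sub (hp : p.Prime) {a k : ℕ} (hk : k < p ^ a)
    (x t : ℕ) :
    (p : ℤ) ^ (alphaP p k + 1) ∣
      ((x + t * p ^ a).descFactorial k : ℤ) - (x.descFactorial k : ℤ) := by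
  have : Fact p.Prime := ⟨hp⟩
  have hchoose : (p : ℤ) ∣ ((x + t * p ^ a).choose k : ℤ) - (x.choose k : ℤ) :=
    (Int.natCast_modEq_iff.mpr (choose_add_mul_pow_modEq hk x t)).symm.dvd
  rw [Nat.descFactorial_eq_factorial_mul_choose, Nat.descFactorial_eq_factorial_mul_choose,
    pow_succ, Nat.cast_mul, Nat.cast_mul, ← mul_sub]
  exact mul_dvd_mul (pow_alphaP_dvd_factorial p k) hchoose

theorem exists_eq_sum_descPochhammer (d : ℕ) {g : ℤ[X]} (hg : g.natDegree ≤ d) :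
    ∃ a : ℕ → ℤ, g = ∑ k ∈ range (d + 1), C (a k) * descPochhammer ℤ k := by
  induction d generalizing g with
  | zero =>
    refine ⟨fun _ => g.coeff 0, ?_⟩
    conv_lhs => rw [eq_C_of_natDegree_le_zero hg]
    simp
  | succ d ih =>
    set c := g.coeff (d + 1)
    have hlead : (descPochhammer ℤ (d + 1)).coeff (d + 1) = 1 := by
      simpa [descPochhammer_natDegree] using (monic_descPochhammer ℤ (d + 1)).coeff_natDegree
    have hdeg : (g - C c * descPochhammer ℤ (d + 1)).natDegree ≤ d := by
      rw [natDegree_le_iff_coeff_eq_zero]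
      intro N hN
      rcases (Nat.succ_le_of_lt hN).eq_or_lt with rfl | hlt
      · simp [c, hlead]
      · rw [coeff_sub, coeff_C_mul, coeff_eq_zero_of_natDegree_lt (hg.trans_lt hlt),
          coeff_eq_zero_of_natDegree_lt (by rwa [descPochhammer_natDegree]), mul_zero, sub_zero]
    obtain ⟨a, ha⟩ := ih hdeg
    refine ⟨Function.update a (d + 1) c, ?_⟩
    rw [sum_range_succ, Function.update_self,
      sum_congr rfl fun k hk => by rw [Function.update_of_ne (mem_range.mp hk).ne], ← ha]
    ring

theorem dvd_mul_factorial_of_dvd_sum_descFactorial {D : ℤ} {K : ℕ} {a : ℕ → ℤ}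
    (h : ∀ m : ℕ, D ∣ ∑ k ∈ range K, a k * m.descFactorial k) {k : ℕ} (hk : k < K) :
    D ∣ a k * k.factorial := by
  induction k using Nat.strong_induction_on with
  | _ k ih =>
    have hsum := h k
    rw [← sum_range_add_sum_Ico _ (by omega : k + 1 ≤ K), sum_range_succ,
      Nat.descFactorial_self] at hsum
    have hlow : D ∣ ∑ j ∈ range k, a j * k.descFactorial j :=
      dvd_sum fun j hj => (ih j (mem_range.mp hj) (by simp at hj; omega)).trans
        (mul_dvd_mul_left _ (by exact_mod_cast Nat.factorial_dvd_descFactorial k j))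
    have hhigh : ∑ j ∈ Ico (k + 1) K, a j * (k.descFactorial j : ℤ) = 0 :=
      sum_eq_zero fun j hj => by
        rw [Nat.descFactorial_eq_zero_iff_lt.mpr (by simp at hj; omega)]; simp
    rw [hhigh, add_zero] at hsum
    exact (dvd_add_right hlow).mp hsum

theorem pow_sub_alphaP_dvd_of_pow_dvd_mul_factorial (hp : p.Prime) {N k : ℕ} {b : ℤ}
    (h : (p : ℤ) ^ N ∣ b * k.factorial) : (p : ℤ) ^ (N - alphaP p k) ∣ b := by
  have : Fact p.Prime := ⟨hp⟩
  rcases eq_or_ne b 0 with rfl | hb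
  · exact dvd_zero _
  have hk : (k.factorial : ℤ) ≠ 0 := by exact_mod_cast k.factorial_ne_zero
  have hval := ((padicValInt_dvd_iff N _).mp h).resolve_left (mul_ne_zero hb hk)
  rw [padicValInt.mul hb hk, padicValInt.of_nat] at hval
  exact (padicValInt_dvd_iff _ b).mpr (Or.inr (by rw [alphaP]; omega))

theorem aeval_natCast_zmod (N : ℕ) (f : ℤ[X]) (m : ℕ) :
    aeval (m : ZMod N) f = ((f.eval (m : ℤ) : ℤ) : ZMod N) := by
  rw [← map_natCast (algebraMap ℤ (ZMod N)), aeval_algebraMap_apply, coe_aeval_eq_eval]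
  simp

theorem forall_aeval_zmod_eq_iff {N : ℕ} [NeZero N] {f g : ℤ[X]} :
    (∀ x : ZMod N, aeval x f = aeval x g) ↔
      ∀ m : ℕ, (N : ℤ) ∣ f.eval (m : ℤ) - g.eval (m : ℤ) := by
  have key : ∀ m : ℕ, aeval (m : ZMod N) f = aeval (m : ZMod N) g ↔
      (N : ℤ) ∣ f.eval (m : ℤ) - g.eval (m : ℤ) := fun m => by
    rw [aeval_natCast_zmod, aeval_natCast_zmod, eq_comm, ZMod.intCast_eq_intCast_iff_dvd_sub]
  refine ⟨fun h m => (key m).mp (h m), fun h x => ?_⟩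
  rw [← ZMod.natCast_zmod_val x]
  exact (key x.val).mpr (h x.val)

theorem ZMod.injective_of_castHom_eq_of_map_add_mul {M N : ℕ} [NeZero N] (hMN : M ∣ N)
    {σ : ZMod N → ZMod N} (hσ : ∀ x, castHom hMN (ZMod M) (σ x) = castHom hMN (ZMod M) x)
    (hshift : ∀ x t : ℕ, σ ((x + t * M : ℕ)) = σ x + ((t * M : ℕ) : ZMod N)) :
    Injective σ := by
  intro x y hxy
  have hmod : x.val % M = y.val % M := by
    have h := congrArg (castHom hMN (ZMod M)) hxy
    rwa [hσ, hσ, castHom_apply, castHom_apply, cast_eq_val, cast_eq_val,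
      natCast_eq_natCast_iff'] at h
  have hx : x = ((x.val % M + x.val / M * M : ℕ) : ZMod N) := by
    rw [Nat.mod_add_div', natCast_zmod_val]
  have hy : y = ((x.val % M + y.val / M * M : ℕ) : ZMod N) := by
    rw [hmod, Nat.mod_add_div', natCast_zmod_val]
  rw [hx, hy, hshift, hshift] at hxy
  rw [hx, hy, Nat.cast_add, Nat.cast_add, add_left_cancel hxy]

theorem bijective_aeval_of_dvd {M N : ℕ} [NeZero N] (hMN : M ∣ N) {f : ℤ[X]}
    (hid : ∀ m : ℕ, (M : ℤ) ∣ f.eval (m : ℤ) - m)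
    (hshift : ∀ x t : ℕ, (N : ℤ) ∣ f.eval ((x + t * M : ℕ) : ℤ) - f.eval (x : ℤ) - (t * M : ℕ)) :
    Bijective fun x : ZMod N => aeval x f := by
  refine Finite.injective_iff_bijective.mp (ZMod.injective_of_castHom_eq_of_map_add_mul hMN ?_ ?_)
  · intro x
    change (ZMod.castHom hMN (ZMod M)).toIntAlgHom (aeval x f) = _
    rw [← aeval_algHom_apply, RingHom.toIntAlgHom_apply, ZMod.castHom_apply, ZMod.cast_eq_val,
      aeval_natCast_zmod, ← Int.cast_natCast (R := ZMod M) x.val, ZMod.intCast_eq_intCast_iff_dvd_sub,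
      ← dvd_neg, neg_sub]
    exact hid x.val
  · intro x t
    rw [aeval_natCast_zmod, aeval_natCast_zmod, ← Int.cast_natCast (R := ZMod N) (t * M),
      ← Int.cast_add, ZMod.intCast_eq_intCast_iff_dvd_sub, ← dvd_neg, neg_sub, sub_add_eq_sub_sub]
    exact hshift x t

noncomputable def scaledFallingSum (p n K : ℕ) (a : ℕ → ℤ) : ℤ[X] :=
  ∑ k ∈ range K, C (a k * (p : ℤ) ^ (n - alphaP p k)) * descPochhammer ℤ k

theorem scaledFallingSum_eval_natCast (p n K : ℕ) (a : ℕ → ℤ) (m : ℕ) :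
    (scaledFallingSum p n K a).eval (m : ℤ) =
      ∑ k ∈ range K, a k * (p : ℤ) ^ (n - alphaP p k) * m.descFactorial k := by
  simp only [scaledFallingSum, eval_finsetSum, eval_mul, eval_C,
    descPochhammer_eval_eq_descFactorial]

theorem scaledFallingSum_sub (p n K : ℕ) (a b : ℕ → ℤ) :
    scaledFallingSum p n K a - scaledFallingSum p n K b = scaledFallingSum p n K (a - b) := by
  simp only [scaledFallingSum, ← sum_sub_distrib, Pi.sub_apply, sub_mul, C_sub]

theorem pow_dvd_mul_pow_sub_alphaP_mul_descFactorial (p n : ℕ) (b : ℤ) (m k : ℕ) :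
    (p : ℤ) ^ n ∣ b * (p : ℤ) ^ (n - alphaP p k) * m.descFactorial k := by
  rw [mul_assoc]
  exact ((pow_dvd_pow _ (by omega)).trans (pow_add _ _ _).dvd).trans
    (dvd_mul_of_dvd_right (mul_dvd_mul_left _ (pow_alphaP_dvd_descFactorial p m k)) _)

theorem pow_dvd_scaledFallingSum_eval (p n K : ℕ) (a : ℕ → ℤ) (m : ℕ) :
    (p : ℤ) ^ n ∣ (scaledFallingSum p n K a).eval (m : ℤ) := by
  rw [scaledFallingSum_eval_natCast]
  exact dvd_sum fun k _ => pow_dvd_mul_pow_sub_alphaP_mul_descFactorial p n _ m k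

theorem pow_succ_dvd_scaledFallingSum_eval_sub {n K : ℕ} {a b : ℕ → ℤ}
    (h : ∀ k < K, (p : ℤ) ∣ a k - b k) (m : ℕ) :
    (p : ℤ) ^ (n + 1) ∣
      (scaledFallingSum p n K a).eval (m : ℤ) - (scaledFallingSum p n K b).eval (m : ℤ) := by
  rw [← eval_sub, scaledFallingSum_sub, scaledFallingSum_eval_natCast]
  refine dvd_sum fun k hk => ?_
  obtain ⟨c, hc⟩ := h k (mem_range.mp hk)
  rw [Pi.sub_apply, hc, pow_succ', mul_assoc, mul_assoc, ← mul_assoc c]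
  exact mul_dvd_mul_left _ (pow_dvd_mul_pow_sub_alphaP_mul_descFactorial p n c m k)

theorem pow_succ_dvd_scaledFallingSum_eval_sub_betaP (hp : p.Prime) {n K : ℕ}
    (hK : betaP p (n + 1) ≤ K) (a : ℕ → ℤ) (m : ℕ) :
    (p : ℤ) ^ (n + 1) ∣ (scaledFallingSum p n K a).eval (m : ℤ) -
      (scaledFallingSum p n (betaP p (n + 1)) a).eval (m : ℤ) := by
  rw [scaledFallingSum_eval_natCast, scaledFallingSum_eval_natCast,
    ← sum_range_add_sum_Ico _ hK, add_sub_cancel_left]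
  refine dvd_sum fun k hk => dvd_mul_of_dvd_right ?_ _
  exact (pow_dvd_pow _ ((betaP_le_iff hp).mp (mem_Ico.mp hk).1)).trans
    (pow_alphaP_dvd_descFactorial p m k)

theorem pow_succ_dvd_scaledFallingSum_eval_add_mul_sub (hp : p.Prime) {n K : ℕ}
    (hK : K ≤ p ^ n) (hα : ∀ k < K, alphaP p k ≤ n) (a : ℕ → ℤ) (x t : ℕ) :
    (p : ℤ) ^ (n + 1) ∣ (scaledFallingSum p n K a).eval ((x + t * p ^ n : ℕ) : ℤ) -
      (scaledFallingSum p n K a).eval (x : ℤ) := by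
  rw [scaledFallingSum_eval_natCast, scaledFallingSum_eval_natCast, ← sum_sub_distrib]
  refine dvd_sum fun k hk => ?_
  have hk := mem_range.mp hk
  rw [← mul_sub, mul_assoc, show n + 1 = n - alphaP p k + (alphaP p k + 1) by grind, pow_add]
  exact dvd_mul_of_dvd_right (mul_dvd_mul_left _
    (pow_alphaP_succ_dvd_descFactorial_sub hp (hk.trans_le hK) x t)) _

theorem prime_dvd_of_pow_succ_dvd_scaledFallingSum_eval (hp : p.Prime) {n K : ℕ}
    (hα : ∀ k < K, alphaP p k ≤ n) {a : ℕ → ℤ}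
    (h : ∀ m : ℕ, (p : ℤ) ^ (n + 1) ∣ (scaledFallingSum p n K a).eval (m : ℤ)) {k : ℕ}
    (hk : k < K) : (p : ℤ) ∣ a k := by
  simp only [scaledFallingSum_eval_natCast] at h
  have hdvd := pow_sub_alphaP_dvd_of_pow_dvd_mul_factorial hp
    (dvd_mul_factorial_of_dvd_sum_descFactorial h hk)
  rw [show n + 1 - alphaP p k = n - alphaP p k + 1 by grind, pow_succ, mul_comm (a k)] at hdvd
  exact (mul_dvd_mul_iff_left (pow_ne_zero _ (by exact_mod_cast hp.ne_zero))).mp hdvd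

theorem exists_eq_scaledFallingSum (hp : p.Prime) {n : ℕ} {g : ℤ[X]}
    (hg : ∀ m : ℕ, (p : ℤ) ^ n ∣ g.eval (m : ℤ)) {K : ℕ} (hK : g.natDegree < K) :
    ∃ b : ℕ → ℤ, g = scaledFallingSum p n K b := by
  obtain ⟨d, rfl⟩ : ∃ d, K = d + 1 := ⟨K - 1, by omega⟩
  obtain ⟨a, ha⟩ := exists_eq_sum_descPochhammer d (Nat.le_of_lt_succ hK)
  have hcoeff : ∀ k < d + 1, (p : ℤ) ^ (n - alphaP p k) ∣ a k := by
    refine fun k hk => pow_sub_alphaP_dvd_of_pow_dvd_mul_factorial hp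
      (dvd_mul_factorial_of_dvd_sum_descFactorial (fun m => ?_) hk)
    simpa [ha, eval_finsetSum, descPochhammer_eval_eq_descFactorial] using hg m
  refine ⟨fun k => a k / (p : ℤ) ^ (n - alphaP p k), ?_⟩
  rw [ha, scaledFallingSum]
  exact sum_congr rfl fun k hk => by rw [Int.ediv_mul_cancel (hcoeff k (mem_range.mp hk))]

theorem alphaP_le_of_lt_betaP (hp : p.Prime) {n k : ℕ} (hk : k < betaP p (n + 1)) :
    alphaP p k ≤ n :=
  Nat.le_of_lt_succ (lt_of_not_ge fun h => hk.not_ge ((betaP_le_iff hp).mpr h))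

theorem bijective_aeval_X_add_scaledFallingSum (hp : p.Prime) {n K : ℕ} (hK : K ≤ p ^ n)
    (hα : ∀ k < K, alphaP p k ≤ n) (a : ℕ → ℤ) :
    Bijective fun x : ZMod (p ^ (n + 1)) => aeval x (X + scaledFallingSum p n K a) := by
  have : NeZero p := ⟨hp.ne_zero⟩
  refine bijective_aeval_of_dvd (pow_dvd_pow p n.le_succ) (fun m => ?_) (fun x t => ?_)
  · simpa using pow_dvd_scaledFallingSum_eval p n K a m
  · have := pow_succ_dvd_scaledFallingSum_eval_add_mul_sub hp hK hα a x t
    push_cast at this ⊢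
    convert this using 1
    simp only [eval_add, eval_X]
    ring

def liftCoeff {K : ℕ} (c : Fin K → ZMod p) (k : ℕ) : ℤ :=
  if h : k < K then (c ⟨k, h⟩).val else 0

theorem liftCoeff_cast [NeZero p] {K : ℕ} (c : Fin K → ZMod p) {k : ℕ} (hk : k < K) :
    (liftCoeff c k : ZMod p) = c ⟨k, hk⟩ := by
  simp [liftCoeff, hk]

noncomputable def kernelPoly (p n : ℕ) (c : Fin (betaP p (n + 1)) → ZMod p) : ℤ[X] :=
  X + scaledFallingSum p n (betaP p (n + 1)) (liftCoeff c)

theorem aeval_kernelPoly_eq_self (hp : p.Prime) {n : ℕ} (c : Fin (betaP p (n + 1)) → ZMod p)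
    (x : ZMod (p ^ n)) : aeval x (kernelPoly p n c) = x := by
  have : NeZero p := ⟨hp.ne_zero⟩
  have h := forall_aeval_zmod_eq_iff (f := kernelPoly p n c) (g := X) (N := p ^ n) |>.mpr
    fun m => by simpa [kernelPoly] using pow_dvd_scaledFallingSum_eval p n _ (liftCoeff c) m
  simpa using h x

theorem injective_aeval_kernelPoly (hp : p.Prime) {n : ℕ} :
    Injective fun (c : Fin (betaP p (n + 1)) → ZMod p) (x : ZMod (p ^ (n + 1))) =>
      aeval x (kernelPoly p n c) := by
  intro c c' h
  have : NeZero p := ⟨hp.ne_zero⟩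
  have hdvd : ∀ m : ℕ, (p : ℤ) ^ (n + 1) ∣
      (scaledFallingSum p n (betaP p (n + 1)) (liftCoeff c - liftCoeff c')).eval (m : ℤ) := by
    intro m
    simpa [kernelPoly, ← scaledFallingSum_sub] using forall_aeval_zmod_eq_iff.mp (congrFun h) m
  funext k
  have hk := prime_dvd_of_pow_succ_dvd_scaledFallingSum_eval hp
    (fun k hk => alphaP_le_of_lt_betaP hp hk) hdvd k.isLt
  rw [Pi.sub_apply, ← ZMod.intCast_zmod_eq_zero_iff_dvd, Int.cast_sub, sub_eq_zero,
    liftCoeff_cast, liftCoeff_cast] at hk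
  exact hk

theorem exists_aeval_kernelPoly_eq (hp : p.Prime) {n : ℕ} {f : ℤ[X]}
    (hf : ∀ x : ZMod (p ^ n), aeval x f = x) :
    ∃ c, ∀ x : ZMod (p ^ (n + 1)), aeval x (kernelPoly p n c) = aeval x f := by
  have : NeZero p := ⟨hp.ne_zero⟩
  have hg : ∀ m : ℕ, (p : ℤ) ^ n ∣ (f - X).eval (m : ℤ) := fun m => by
    have h := (forall_aeval_zmod_eq_iff (g := X)).mp (fun x => by simpa using hf x) m
    push_cast at h
    simpa using h
  set K := max (f - X).natDegree (betaP p (n + 1)) + 1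
  obtain ⟨b, hb⟩ := exists_eq_scaledFallingSum hp hg (K := K) (by omega)
  have hfm : ∀ m : ℕ, f.eval (m : ℤ) = m + (scaledFallingSum p n K b).eval (m : ℤ) := fun m => by
    rw [← hb, eval_sub, eval_X]; ring
  refine ⟨fun k => (b k : ZMod p), forall_aeval_zmod_eq_iff.mpr fun m => ?_⟩
  have hcongr : ∀ k < betaP p (n + 1), (p : ℤ) ∣ liftCoeff (fun k => (b k : ZMod p)) k - b k :=
    fun k hk => (ZMod.intCast_eq_intCast_iff_dvd_sub _ _ _).mp
      (liftCoeff_cast (fun k : Fin (betaP p (n + 1)) => (b k : ZMod p)) hk).symm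
  push_cast
  rw [hfm, kernelPoly, eval_add, eval_X, add_sub_add_left_eq_sub,
    ← sub_sub_sub_cancel_right _ _ ((scaledFallingSum p n (betaP p (n + 1)) b).eval (m : ℤ))]
  exact dvd_sub (pow_succ_dvd_scaledFallingSum_eval_sub hcongr m)
    (pow_succ_dvd_scaledFallingSum_eval_sub_betaP hp (K := K) (by omega) b m)

/-- For `n ≥ 2`, the kernel of the canonical epimorphism
`π_n : G_{n+1} → G_n` (from polynomial permutations of `ℤ/p^{n+1}ℤ` onto
polynomial permutations of `ℤ/p^nℤ`) has order `p^{β_p(n+1)}`: the kernel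
consists of those polynomial permutations of `ℤ/p^{n+1}ℤ` that are induced
by a polynomial which induces the identity on `ℤ/p^nℤ`. -/
theorem card_ker_canonical_projection (p : ℕ) (hp : p.Prime) (n : ℕ) (hn : 2 ≤ n) :
    Nat.card {σ : ZMod (p ^ (n + 1)) → ZMod (p ^ (n + 1)) //
        Function.Bijective σ ∧
        ∃ f : Polynomial ℤ,
          (σ = fun x => Polynomial.aeval x f) ∧
          ∀ x : ZMod (p ^ n), Polynomial.aeval x f = x} =
      p ^ betaP p (n + 1) := by
  have : NeZero p := ⟨hp.ne_zero⟩
  let Φ : (Fin (betaP p (n + 1)) → ZMod p) → {σ : ZMod (p ^ (n + 1)) → ZMod (p ^ (n + 1)) //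
      Bijective σ ∧ ∃ f : ℤ[X], (σ = fun x => aeval x f) ∧ ∀ x : ZMod (p ^ n), aeval x f = x} :=
    fun c => ⟨fun x => aeval x (kernelPoly p n c),
      bijective_aeval_X_add_scaledFallingSum hp (betaP_succ_le_pow hp hn)
        (fun _ => alphaP_le_of_lt_betaP hp) _,
      kernelPoly p n c, rfl, aeval_kernelPoly_eq_self hp c⟩
  have hΦ : Bijective Φ := by
    refine ⟨fun c c' h => injective_aeval_kernelPoly hp (congrArg Subtype.val h), ?_⟩
    rintro ⟨σ, -, f, rfl, hf⟩
    obtain ⟨c, hc⟩ := exists_aeval_kernelPoly_eq hp hf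
    exact ⟨c, Subtype.ext (funext hc)⟩
  rw [← Nat.card_eq_of_bijective Φ hΦ, Nat.card_fun, Nat.card_zmod, Nat.card_fin]
end

section
/- Let p be a prime and n ≥ 2. For every cyclic subgroup C of order p of Sym(ℤ/pℤ) and every function φ : ℤ/pℤ → ℤ/pℤ∖{0}, the set S_{(C,φ)} = {[f]_{p^n} ∈ G_n : [f]_p ∈ C and [f′]_p(x) = φ([f]_p(x))/φ(x) for all x ∈ ℤ/pℤ} is a Sylow p-subgroup of G_n; every Sylow p-subgroup of G_n is of this form; and S_{(C,φ)} = S_{(D,ψ)} if and only if C = D and φ = k·ψ for some nonzero constant k ∈ ℤ/pℤ. Consequently the Sylow p-subgroups of G_n are in bijective correspondence with pairs (C, φ̄), where φ̄ is the class of φ under multiplication by nonzero constants. -/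
/-- The group `G_n` of polynomial permutations of `ℤ/p^nℤ`, as a subgroup of
the permutation group of `ZMod (p ^ n)`: those permutations induced by a
polynomial with integer coefficients. -/
def polyPermGroup (p n : ℕ) [NeZero (p ^ n)] : Subgroup (Equiv.Perm (ZMod (p ^ n))) where
  carrier := {σ | ∃ f : Polynomial ℤ, ∀ x, σ x = Polynomial.aeval x f}
  one_mem' := ⟨Polynomial.X, fun x => by simp⟩
  mul_mem' := by
    rintro σ τ ⟨f, hf⟩ ⟨g, hg⟩
    exact ⟨f.comp g, fun x => by
      simp [Equiv.Perm.mul_apply, hf, hg, Polynomial.aeval_comp]⟩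
  inv_mem' := by
    rintro σ ⟨f, hf⟩
    have hpow : ∀ m : ℕ, ∃ g : Polynomial ℤ, ∀ x, (σ ^ m) x = Polynomial.aeval x g := by
      intro m
      induction m with
      | zero => exact ⟨Polynomial.X, fun x => by simp⟩
      | succ m ih =>
        obtain ⟨g, hg⟩ := ih
        refine ⟨g.comp f, fun x => ?_⟩
        rw [pow_succ, Equiv.Perm.mul_apply, hg, hf, Polynomial.aeval_comp]
    obtain ⟨g, hg⟩ := hpow (orderOf σ - 1)
    have h1 : σ⁻¹ = σ ^ (orderOf σ - 1) := by
      have hpos : 0 < orderOf σ := orderOf_pos σ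
      have hmul : σ * σ ^ (orderOf σ - 1) = 1 := by
        rw [← pow_succ', Nat.sub_add_cancel hpos, pow_orderOf_eq_one]
      exact (eq_inv_of_mul_eq_one_right hmul).symm
    exact ⟨g, fun x => by rw [h1]; exact hg x⟩

/-- The subset `S_{(C,φ)} = {[f]_{p^n} ∈ G_n : [f]_p ∈ C,
[f']_p(x) = φ([f]_p(x))/φ(x)}` of `G_n`. -/
def sylowCandidateGn (p n : ℕ) [NeZero (p ^ n)] (C : Subgroup (Equiv.Perm (ZMod p)))
    (φ : ZMod p → (ZMod p)ˣ) : Set (polyPermGroup p n) :=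
  {σ : polyPermGroup p n | ∃ f : Polynomial ℤ,
    (∀ x : ZMod (p ^ n), (σ : Equiv.Perm (ZMod (p ^ n))) x = Polynomial.aeval x f) ∧
    ∃ c ∈ C, (∀ x : ZMod p, Polynomial.aeval x f = c x) ∧
      ∀ x : ZMod p, Polynomial.aeval x (Polynomial.derivative f) =
        ((φ (c x) / φ x : (ZMod p)ˣ) : ZMod p)}

/-!
For `σ = [f]_{p^n}` write `σ̄ = [f]_p ∈ Sym(𝔽_p)` and `σ' = [f']_p`. For `n ≥ 2` both depend only
on `σ` (Taylor expansion at `x + p`) and `σ'` takes values in `𝔽_p^×`, so by the chain rule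
`θ σ = (σ' ∘ σ̄⁻¹, σ̄)` is a homomorphism from `G_n` to the wreath product `W = 𝔽_p^× ≀ Sym(𝔽_p)`.
Hermite interpolation modulo `p` and Hensel lifting make `θ` surjective, and its kernel is a
`p`-group: if `σ ≡ id (mod p^k)` and `σ' = 1`, Taylor expansion gives `σ^p ≡ id (mod p^(k+1))`.
Hence the Sylow `p`-subgroups of `G_n` are the preimages of those of `W`. Since `p ∥ |W|`, the
latter are the conjugates of one subgroup `C ≤ Sym(𝔽_p)` of order `p`, i.e. the subgroups
`φ C φ⁻¹`, whose preimages are the `S_{(C,φ)}`. Finally `φ C φ⁻¹ = ψ D ψ⁻¹` forces `C = D` and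
makes `φ / ψ` invariant under `C`, which is transitive on `𝔽_p`, so `φ / ψ` is constant.
-/

open Polynomial Pointwise

namespace Polynomial
variable {R : Type*} [CommRing R]

theorem sub_sq_dvd_eval_sub_sub_derivative_mul (f : R[X]) (a b : R) :
    (b - a) ^ 2 ∣ f.eval b - f.eval a - f.derivative.eval a * (b - a) := by
  obtain ⟨c, hc⟩ := binomExpansion f a (b - a)
  rw [add_sub_cancel] at hc
  exact ⟨c, by rw [hc]; ring⟩

theorem dvd_eval_derivative_of_forall_sq_dvd_eval [IsDomain R] {q : R} (hq : q ≠ 0) {h : R[X]}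
    (hh : ∀ x, q ^ 2 ∣ h.eval x) (x : R) : q ∣ h.derivative.eval x := by
  have htaylor := h.sub_sq_dvd_eval_sub_sub_derivative_mul x (x + q)
  rw [add_sub_cancel_left] at htaylor
  have : q * q ∣ h.derivative.eval x * q := by
    rw [← sq]
    simpa using (dvd_sub (dvd_sub (hh (x + q)) (hh x)) htaylor)
  exact (mul_dvd_mul_iff_right hq).mp this

theorem not_dvd_eval_derivative_of_injective_mod [IsDomain R] {q : R} (hq : q ≠ 0)
    (hq1 : ¬IsUnit q) {n : ℕ} (hn : 2 ≤ n) {f : R[X]}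
    (hf : ∀ a b, q ^ n ∣ f.eval a - f.eval b → q ^ n ∣ a - b) (x : R) :
    ¬q ∣ f.derivative.eval x := by
  rintro ⟨c, hc⟩
  set d := q ^ (n - 1)
  have hqd : q ^ n = q * d := by rw [← pow_succ', Nat.sub_add_cancel (by omega)]
  have htaylor := f.sub_sq_dvd_eval_sub_sub_derivative_mul x (x + d)
  rw [add_sub_cancel_left] at htaylor
  have hd2 : q ^ n ∣ d ^ 2 := by rw [← pow_mul]; exact pow_dvd_pow q (by omega)
  have hlin : q ^ n ∣ f.derivative.eval x * d := ⟨c, by rw [hc, hqd]; ring⟩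
  have hval : q ^ n ∣ f.eval (x + d) - f.eval x := by
    simpa using dvd_add (hd2.trans htaylor) hlin
  have : q * d ∣ 1 * d := by simpa [hqd] using hf _ _ hval
  exact hq1 (isUnit_of_dvd_one ((mul_dvd_mul_iff_right (pow_ne_zero _ hq)).mp this))

theorem pow_dvd_sub_of_pow_dvd_eval_sub [IsDomain R] {q : R} (hq : Prime q) {f : R[X]}
    (hf : ∀ a b, q ∣ f.eval a - f.eval b → q ∣ a - b)
    (hf' : ∀ x, ¬q ∣ f.derivative.eval x) {a b : R} :
    ∀ k : ℕ, q ^ k ∣ f.eval a - f.eval b → q ^ k ∣ a - b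
  | 0, _ => by simp
  | 1, h => by simpa using hf a b (by simpa using h)
  | k + 2, h => by
    obtain ⟨t, ht⟩ := pow_dvd_sub_of_pow_dvd_eval_sub hq hf hf' (k + 1)
      ((pow_dvd_pow q (by omega)).trans h)
    have htaylor := f.sub_sq_dvd_eval_sub_sub_derivative_mul b a
    have hsq : q ^ (k + 2) ∣ (a - b) ^ 2 := by
      rw [ht, mul_pow, ← pow_mul]; exact (pow_dvd_pow q (by omega)).mul_right _
    have hlin : q ^ (k + 1) * q ∣ q ^ (k + 1) * (f.derivative.eval b * t) := by
      rw [← pow_succ]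
      have := dvd_sub h (hsq.trans htaylor)
      rw [sub_sub_cancel, ht] at this
      simpa [mul_left_comm] using this
    have ht' : q ∣ t := ((hq.dvd_mul.mp ((mul_dvd_mul_iff_left
      (pow_ne_zero _ hq.ne_zero)).mp hlin)).resolve_left (hf' b))
    rw [ht, pow_succ]
    exact mul_dvd_mul_left _ ht'

theorem pow_succ_dvd_iterate_eval_sub_self (q : ℕ) {k : ℕ} (hk : 1 ≤ k) {g : R[X]}
    (hg : ∀ x, (q : R) ^ k ∣ g.eval x - x) (hg' : ∀ x, (q : R) ∣ g.derivative.eval x - 1)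
    (x : R) : (q : R) ^ (k + 1) ∣ (fun y => g.eval y)^[q] x - x := by
  set e := g.eval x - x
  have hstep : ∀ j : ℕ, (q : R) ^ (k + 1) ∣ (fun y => g.eval y)^[j] x - x - j * e := by
    intro j
    induction j with
    | zero => simp
    | succ j ih =>
      set a := (fun y => g.eval y)^[j] x
      have hax : (q : R) ^ k ∣ a - x := by
        have : (q : R) ^ k ∣ j * e := (hg x).mul_left _
        simpa using dvd_add ((pow_dvd_pow _ k.le_succ).trans ih) this
      have htaylor := (g - X).sub_sq_dvd_eval_sub_sub_derivative_mul x a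
      have hsq : (q : R) ^ (k + 1) ∣ (a - x) ^ 2 := by
        rw [sq, pow_succ]
        exact mul_dvd_mul hax ((dvd_pow_self _ (by omega)).trans hax)
      have hlin : (q : R) ^ (k + 1) ∣ (g.derivative.eval x - 1) * (a - x) := by
        rw [pow_succ']; exact mul_dvd_mul (hg' x) hax
      have := dvd_add ih (dvd_add (hsq.trans htaylor) hlin)
      rw [Function.iterate_succ_apply']
      convert this using 1
      simp only [eval_sub, eval_X, eval_one, derivative_sub, derivative_X, e, a]
      push_cast; ring
  have hqe : (q : R) ^ (k + 1) ∣ q * e := by rw [pow_succ']; exact mul_dvd_mul_left _ (hg x)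
  simpa using dvd_add (hstep q) hqe

theorem aeval_intCast {A : Type*} [Ring A] (f : ℤ[X]) (m : ℤ) :
    aeval (m : A) f = ((f.eval m : ℤ) : A) := by
  rw [aeval_def, algebraMap_int_eq, eval₂_at_intCast, eq_intCast, Int.cast_id]

end Polynomial

theorem FiniteField.exists_eval_eq_and_eval_derivative_eq {K : Type*} [Field K] [Fintype K]
    (u v : K → K) : ∃ F : K[X], ∀ x, F.eval x = u x ∧ F.derivative.eval x = v x := by
  classical
  have interp : ∀ w : K → K, ∃ G : K[X], ∀ x, G.eval x = w x := fun w =>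
    ⟨Lagrange.interpolate Finset.univ id w, fun x => by
      simpa using Lagrange.eval_interpolate_at_node w (Set.injOn_id _) (Finset.mem_univ x)⟩
  obtain ⟨G, hG⟩ := interp u
  obtain ⟨H, hH⟩ := interp fun x => G.derivative.eval x - v x
  -- `X ^ q - X` vanishes on `K` and its derivative is `-1` there
  refine ⟨G + (X ^ Fintype.card K - X) * H, fun x => ⟨?_, ?_⟩⟩
  · simp [hG, FiniteField.pow_card]
  · simp [hH, FiniteField.pow_card, derivative_X_pow]

namespace ZMod
variable {N : ℕ} {f g : ℤ[X]}

theorem forall_aeval_eq_iff :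
    (∀ x : ZMod N, aeval x f = aeval x g) ↔ ∀ m : ℤ, (N : ℤ) ∣ f.eval m - g.eval m := by
  simp only [← intCast_eq_intCast_iff_dvd_sub, intCast_surjective.forall, aeval_intCast,
    eq_comm]

theorem injective_aeval_iff :
    Function.Injective (fun x : ZMod N => aeval x f) ↔
      ∀ a b : ℤ, (N : ℤ) ∣ f.eval a - f.eval b → (N : ℤ) ∣ a - b := by
  simp only [Function.Injective, ← intCast_eq_intCast_iff_dvd_sub, intCast_surjective.forall,
    aeval_intCast, eq_comm]

theorem forall_aeval_ne_zero_iff :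
    (∀ x : ZMod N, aeval x f ≠ 0) ↔ ∀ m : ℤ, ¬(N : ℤ) ∣ f.eval m := by
  simp only [← intCast_zmod_eq_zero_iff_dvd, intCast_surjective.forall, aeval_intCast]

theorem forall_aeval_eq_of_dvd {M N : ℕ} (hNM : N ∣ M)
    (h : ∀ x : ZMod M, aeval x f = aeval x g) (x : ZMod N) : aeval x f = aeval x g :=
  forall_aeval_eq_iff.mpr (fun m => (Int.natCast_dvd_natCast.mpr hNM).trans
    (forall_aeval_eq_iff.mp h m)) x

theorem forall_aeval_derivative_eq_of_sq_dvd {p N : ℕ} [NeZero p] (hN : p ^ 2 ∣ N)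
    (h : ∀ x : ZMod N, aeval x f = aeval x g) (x : ZMod p) :
    aeval x (derivative f) = aeval x (derivative g) := by
  refine forall_aeval_eq_iff.mpr (fun m => ?_) x
  have hsq : ∀ m, (p : ℤ) ^ 2 ∣ (f - g).eval m := fun m => by
    simpa using (Int.natCast_dvd_natCast.mpr hN).trans (forall_aeval_eq_iff.mp h m)
  simpa using dvd_eval_derivative_of_forall_sq_dvd_eval (by exact_mod_cast NeZero.ne p) hsq m

theorem bijective_aeval_of_surjective {M N : ℕ} [NeZero N] (hNM : N ∣ M)
    (hf : Function.Surjective fun x : ZMod M => aeval x f) :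
    Function.Bijective fun x : ZMod N => aeval x f := by
  refine Finite.surjective_iff_bijective.mp fun y => ?_
  obtain ⟨y, rfl⟩ := castHom_surjective hNM y
  obtain ⟨z, rfl⟩ := hf y
  exact ⟨castHom hNM (ZMod N) z, aeval_algHom_apply (castHom hNM (ZMod N)).toIntAlgHom z f⟩

theorem natCast_dvd_of_castHom_eq_zero {M N : ℕ} (hNM : N ∣ M) {y : ZMod M}
    (hy : castHom hNM (ZMod N) y = 0) : (N : ZMod M) ∣ y := by
  obtain ⟨m, rfl⟩ := intCast_surjective y
  obtain ⟨t, rfl⟩ := (intCast_zmod_eq_zero_iff_dvd m N).mp (by simpa using hy)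
  exact ⟨t, by push_cast; ring⟩

variable {p : ℕ} [Fact p.Prime]

theorem aeval_derivative_ne_zero_of_injective {n : ℕ} (hn : 2 ≤ n)
    (hf : Function.Injective fun x : ZMod (p ^ n) => aeval x f) (x : ZMod p) :
    aeval x (derivative f) ≠ 0 := by
  have hp : Prime (p : ℤ) := Nat.prime_iff_prime_int.mp Fact.out
  refine forall_aeval_ne_zero_iff.mpr (fun m => ?_) x
  exact not_dvd_eval_derivative_of_injective_mod hp.ne_zero hp.not_isUnit hn
    (by simpa using injective_aeval_iff.mp hf) m

theorem injective_aeval_pow_of_injective (hf : Function.Injective fun x : ZMod p => aeval x f)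
    (hf' : ∀ x : ZMod p, aeval x (derivative f) ≠ 0) (n : ℕ) :
    Function.Injective fun x : ZMod (p ^ n) => aeval x f := by
  have hp : Prime (p : ℤ) := Nat.prime_iff_prime_int.mp Fact.out
  refine injective_aeval_iff.mpr fun a b h => ?_
  push_cast at h ⊢
  exact pow_dvd_sub_of_pow_dvd_eval_sub hp (by simpa using injective_aeval_iff.mp hf)
    (forall_aeval_ne_zero_iff.mp hf') n h

theorem exists_aeval_eq_and_aeval_derivative_eq (u v : ZMod p → ZMod p) :
    ∃ f : ℤ[X], ∀ x, aeval x f = u x ∧ aeval x (derivative f) = v x := by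
  obtain ⟨F, hF⟩ := FiniteField.exists_eval_eq_and_eval_derivative_eq u v
  obtain ⟨f, rfl⟩ := map_surjective (Int.castRingHom (ZMod p)) intCast_surjective F
  refine ⟨f, fun x => ?_⟩
  simpa [← derivative_map, ← eval_map_algebraMap] using hF x

end ZMod

theorem Equiv.Perm.isPretransitive_of_card_eq_prime {α : Type*} [Fintype α]
    [DecidableEq α] (hα : (Fintype.card α).Prime) {C : Subgroup (Equiv.Perm α)}
    (hC : Nat.card C = Fintype.card α) : MulAction.IsPretransitive C α := by
  have := Fact.mk hα
  obtain ⟨c, hc⟩ := exists_prime_orderOf_dvd_card' (Fintype.card α) hC.symm.dvd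
  rw [← Subgroup.orderOf_coe] at hc
  have hcycle : (c : Equiv.Perm α).IsCycle := isCycle_of_prime_order'' hα hc
  have hmoves : ∀ x, (c : Equiv.Perm α) x ≠ x := by
    intro x
    rw [← Equiv.Perm.mem_support,
      Finset.eq_univ_of_card (c : Equiv.Perm α).support (hcycle.orderOf ▸ hc)]
    exact Finset.mem_univ x
  refine ⟨fun x y => ?_⟩
  obtain ⟨i, hi⟩ := hcycle.exists_zpow_eq (hmoves x) (hmoves y)
  exact ⟨c ^ i, hi⟩

@[simp] theorem mulAutArrow_perm_apply {α M : Type*} [Monoid M] (c : Equiv.Perm α) (φ : α → M)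
    (x : α) : mulAutArrow c φ x = φ (c⁻¹ x) := rfl

/-- The wreath product `𝔽_p^× ≀ Sym(𝔽_p)`. -/
abbrev UnitsWreath (p : ℕ) := (ZMod p → (ZMod p)ˣ) ⋊[mulAutArrow] Equiv.Perm (ZMod p)

namespace UnitsWreath
open SemidirectProduct
variable {p : ℕ}

instance [NeZero p] : Finite (UnitsWreath p) := Finite.of_equiv _ equivProd.symm

def twistedSubgroup (C : Subgroup (Equiv.Perm (ZMod p))) (φ : ZMod p → (ZMod p)ˣ) :
    Subgroup (UnitsWreath p) :=
  MulAut.conj (inl φ : UnitsWreath p) • C.map (inr : _ →* UnitsWreath p)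

theorem mem_twistedSubgroup {C : Subgroup (Equiv.Perm (ZMod p))} {φ : ZMod p → (ZMod p)ˣ}
    {w : UnitsWreath p} :
    w ∈ twistedSubgroup C φ ↔ w.right ∈ C ∧ ∀ y, w.left (w.right y) = φ (w.right y) / φ y := by
  simp only [twistedSubgroup, Subgroup.mem_smul_pointwise_iff_exists, Subgroup.mem_map,
    exists_exists_and_eq_and]
  constructor
  · rintro ⟨c, hc, rfl⟩
    simp [hc, div_eq_mul_inv, -mulAutArrow_apply_apply]
  · rintro ⟨hC, hleft⟩
    refine ⟨w.right, hC, SemidirectProduct.ext ?_ (by simp)⟩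
    funext x
    obtain ⟨y, rfl⟩ := w.right.surjective x
    simp [hleft, div_eq_mul_inv, -mulAutArrow_apply_apply]

theorem card_twistedSubgroup (C : Subgroup (Equiv.Perm (ZMod p))) (φ : ZMod p → (ZMod p)ˣ) :
    Nat.card (twistedSubgroup C φ) = Nat.card C :=
  (Nat.card_congr (Subgroup.equivSMul _ _).toEquiv).symm.trans
    (Subgroup.card_map_of_injective inr_injective)

theorem conj_smul_twistedSubgroup (g : UnitsWreath p) (C : Subgroup (Equiv.Perm (ZMod p)))
    (φ : ZMod p → (ZMod p)ˣ) :
    MulAut.conj g • twistedSubgroup C φ =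
      twistedSubgroup (MulAut.conj g.right • C) (g.left * mulAutArrow g.right φ) := by
  have hg : g * inl φ = (inl (g.left * mulAutArrow g.right φ) * inr g.right : UnitsWreath p) := by
    ext <;> simp
  have hmap : MulAut.conj (inr g.right : UnitsWreath p) • C.map (inr : _ →* UnitsWreath p) =
      (MulAut.conj g.right • C).map inr := by
    ext x
    simp [Subgroup.mem_smul_pointwise_iff_exists]
  rw [twistedSubgroup, twistedSubgroup, smul_smul, ← map_mul, hg, map_mul, ← smul_smul, hmap]

theorem le_of_twistedSubgroup_le {C D : Subgroup (Equiv.Perm (ZMod p))}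
    {φ ψ : ZMod p → (ZMod p)ˣ} (h : twistedSubgroup C φ ≤ twistedSubgroup D ψ) :
    C ≤ D ∧ ∀ c ∈ C, ∀ y, φ (c y) / φ y = ψ (c y) / ψ y := by
  have hmem : ∀ c ∈ C, c ∈ D ∧ ∀ y, φ (c y) / φ y = ψ (c y) / ψ y := by
    intro c hc
    have hmem : (⟨fun x => φ x / φ (c⁻¹ x), c⟩ : UnitsWreath p) ∈ twistedSubgroup C φ :=
      mem_twistedSubgroup.mpr ⟨hc, fun y => by simp⟩
    simpa using mem_twistedSubgroup.mp (h hmem)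
  exact ⟨fun c hc => (hmem c hc).1, fun c hc => (hmem c hc).2⟩

variable [Fact p.Prime]

theorem twistedSubgroup_eq_iff {C D : Subgroup (Equiv.Perm (ZMod p))}
    {φ ψ : ZMod p → (ZMod p)ˣ} (hC : Nat.card C = p) :
    twistedSubgroup C φ = twistedSubgroup D ψ ↔ C = D ∧ ∃ k : (ZMod p)ˣ, ∀ x, φ x = k * ψ x := by
  constructor
  · intro h
    obtain ⟨hCD, hratio⟩ := le_of_twistedSubgroup_le h.le
    refine ⟨le_antisymm hCD (le_of_twistedSubgroup_le h.ge).1, φ 0 / ψ 0, fun y => ?_⟩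
    have := Equiv.Perm.isPretransitive_of_card_eq_prime (α := ZMod p) (C := C)
      (by rw [ZMod.card]; exact Fact.out) (by rw [ZMod.card, hC])
    obtain ⟨⟨c, hc⟩, rfl⟩ := MulAction.exists_smul_eq C (0 : ZMod p) y
    have := hratio c hc 0
    rw [div_eq_div_iff_div_eq_div] at this
    simp [← this]
  · rintro ⟨rfl, k, hk⟩
    ext w
    simp [mem_twistedSubgroup, hk, mul_div_mul_left_eq_div]

theorem factorization_card : (Nat.card (UnitsWreath p)).factorization p = 1 := by
  have hp : p.Prime := Fact.out
  have hp1 : p - 1 ≠ 0 := by have := hp.two_le; omega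
  have hcard : Nat.card (UnitsWreath p) = (p - 1) ^ p * (p * (p - 1).factorial) := by
    rw [SemidirectProduct.card, Nat.card_fun, Nat.card_perm, Nat.card_zmod,
      Nat.card_eq_fintype_card (α := (ZMod p)ˣ), ZMod.card_units, Nat.mul_factorial_pred hp.ne_zero]
  have hunits : ¬p ∣ p - 1 := fun h => by have := Nat.le_of_dvd (by omega) h; omega
  have hfact : ¬p ∣ (p - 1).factorial := by rw [hp.dvd_factorial]; omega
  rw [hcard, Nat.factorization_mul (pow_ne_zero _ hp1) (mul_ne_zero hp.ne_zero (by positivity)),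
    Nat.factorization_mul hp.ne_zero (by positivity), Nat.factorization_pow]
  simp [Nat.factorization_eq_zero_of_not_dvd hunits, Nat.factorization_eq_zero_of_not_dvd hfact,
    hp.factorization_self]

noncomputable def sylowTwisted {C : Subgroup (Equiv.Perm (ZMod p))} (hC : Nat.card C = p)
    (φ : ZMod p → (ZMod p)ˣ) : Sylow p (UnitsWreath p) :=
  Sylow.ofCard (twistedSubgroup C φ) (by rw [card_twistedSubgroup, hC, factorization_card, pow_one])

theorem exists_twistedSubgroup_eq (P : Sylow p (UnitsWreath p)) :
    ∃ (C : Subgroup (Equiv.Perm (ZMod p))) (φ : ZMod p → (ZMod p)ˣ),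
      Nat.card C = p ∧ (P : Subgroup (UnitsWreath p)) = twistedSubgroup C φ := by
  have hp : p.Prime := Fact.out
  obtain ⟨C₀, hC₀⟩ := Sylow.exists_subgroup_card_pow_prime (G := Equiv.Perm (ZMod p)) p
    (n := 1) (by rw [pow_one, Nat.card_perm, Nat.card_zmod]; exact Nat.dvd_factorial hp.pos le_rfl)
  rw [pow_one] at hC₀
  obtain ⟨g, rfl⟩ := MulAction.exists_smul_eq (UnitsWreath p) (sylowTwisted hC₀ 1) P
  refine ⟨MulAut.conj g.right • C₀, g.left * mulAutArrow g.right 1, ?_, ?_⟩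
  · exact (Nat.card_congr (Subgroup.equivSMul _ _).toEquiv.symm).trans hC₀
  · rw [Sylow.coe_subgroup_smul, sylowTwisted, Sylow.coe_ofCard, conj_smul_twistedSubgroup]

end UnitsWreath

namespace polyPermGroup
open Equiv

section
variable {p n : ℕ} [NeZero (p ^ n)]

noncomputable def rep (σ : polyPermGroup p n) : ℤ[X] := σ.2.choose

theorem apply_eq_aeval_rep (σ : polyPermGroup p n) (x : ZMod (p ^ n)) :
    (σ : Perm (ZMod (p ^ n))) x = aeval x (rep σ) :=
  σ.2.choose_spec x

theorem mul_apply_eq_aeval_comp (σ τ : polyPermGroup p n) (x : ZMod (p ^ n)) :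
    ((σ * τ : polyPermGroup p n) : Perm (ZMod (p ^ n))) x = aeval x ((rep σ).comp (rep τ)) := by
  rw [aeval_comp, ← apply_eq_aeval_rep, ← apply_eq_aeval_rep]; rfl

end

variable {p n : ℕ} [Fact p.Prime] (hn : 2 ≤ n)

noncomputable def reduction : polyPermGroup p n →* Perm (ZMod p) where
  toFun σ := Equiv.ofBijective _ <| ZMod.bijective_aeval_of_surjective (f := rep σ)
    (dvd_pow_self p (by omega : n ≠ 0)) <| by
      simpa only [← apply_eq_aeval_rep] using (σ : Perm (ZMod (p ^ n))).surjective
  map_one' := Equiv.ext fun x => by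
    simpa using ZMod.forall_aeval_eq_of_dvd (f := rep 1) (g := X)
      (dvd_pow_self p (by omega : n ≠ 0)) (fun y => by simp [← apply_eq_aeval_rep]) x
  map_mul' σ τ := Equiv.ext fun x => by
    simpa [aeval_comp] using ZMod.forall_aeval_eq_of_dvd (dvd_pow_self p (by omega : n ≠ 0))
      (fun y => (apply_eq_aeval_rep (σ * τ) y).symm.trans (mul_apply_eq_aeval_comp σ τ y)) x

theorem reduction_apply {σ : polyPermGroup p n} {f : ℤ[X]}
    (hf : ∀ x, (σ : Perm (ZMod (p ^ n))) x = aeval x f) (x : ZMod p) :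
    reduction hn σ x = aeval x f :=
  ZMod.forall_aeval_eq_of_dvd (dvd_pow_self p (by omega : n ≠ 0))
    (fun y => (apply_eq_aeval_rep σ y).symm.trans (hf y)) x

noncomputable def derivUnit (σ : polyPermGroup p n) (x : ZMod p) : (ZMod p)ˣ :=
  Units.mk0 (aeval x (derivative (rep σ))) <| ZMod.aeval_derivative_ne_zero_of_injective hn
    (by simpa only [← apply_eq_aeval_rep] using (σ : Perm (ZMod (p ^ n))).injective) x

theorem derivUnit_val {σ : polyPermGroup p n} {f : ℤ[X]}
    (hf : ∀ x, (σ : Perm (ZMod (p ^ n))) x = aeval x f) (x : ZMod p) :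
    (derivUnit hn σ x : ZMod p) = aeval x (derivative f) :=
  ZMod.forall_aeval_derivative_eq_of_sq_dvd (pow_dvd_pow p hn)
    (fun y => (apply_eq_aeval_rep σ y).symm.trans (hf y)) x

theorem derivUnit_one (x : ZMod p) : derivUnit hn 1 x = 1 :=
  Units.ext <| by simpa using derivUnit_val hn (f := X) (fun y => by simp) x

theorem derivUnit_mul (σ τ : polyPermGroup p n) (x : ZMod p) :
    derivUnit hn (σ * τ) x = derivUnit hn σ (reduction hn τ x) * derivUnit hn τ x := by
  ext
  rw [derivUnit_val hn (mul_apply_eq_aeval_comp σ τ), Units.val_mul,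
    derivUnit_val hn (apply_eq_aeval_rep σ), derivUnit_val hn (apply_eq_aeval_rep τ),
    reduction_apply hn (apply_eq_aeval_rep τ), derivative_comp, map_mul, aeval_comp, mul_comm]

noncomputable def toUnitsWreath : polyPermGroup p n →* UnitsWreath p where
  toFun σ := ⟨mulAutArrow (reduction hn σ) (derivUnit hn σ), reduction hn σ⟩
  map_one' := by ext <;> simp [derivUnit_one]
  map_mul' σ τ := by ext <;> simp [derivUnit_mul, -mulAutArrow_apply_apply]

theorem toUnitsWreath_right (σ : polyPermGroup p n) :
    (toUnitsWreath hn σ).right = reduction hn σ := rfl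

theorem toUnitsWreath_left_reduction (σ : polyPermGroup p n) (y : ZMod p) :
    (toUnitsWreath hn σ).left (reduction hn σ y) = derivUnit hn σ y := by
  simp [toUnitsWreath, -mulAutArrow_apply_apply]

theorem toUnitsWreath_surjective : Function.Surjective (toUnitsWreath (p := p) hn) := by
  rintro ⟨a, c⟩
  obtain ⟨f, hf⟩ := ZMod.exists_aeval_eq_and_aeval_derivative_eq (fun x => (c x : ZMod p))
    (fun x => (a (c x) : ZMod p))
  have hinj : Function.Injective fun x : ZMod (p ^ n) => aeval x f :=
    ZMod.injective_aeval_pow_of_injective (by simpa only [fun x => (hf x).1] using c.injective)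
      (fun x => by simp [(hf x).2]) n
  let σ : polyPermGroup p n :=
    ⟨Equiv.ofBijective _ (Finite.injective_iff_bijective.mp hinj), f, fun _ => rfl⟩
  have hred : reduction hn σ = c :=
    Equiv.ext fun x => (reduction_apply hn (fun _ => rfl) x).trans (hf x).1
  refine ⟨σ, SemidirectProduct.ext (funext fun x => ?_) hred⟩
  obtain ⟨y, rfl⟩ := c.surjective x
  rw [← hred, toUnitsWreath_left_reduction]
  exact Units.ext ((derivUnit_val hn (fun _ => rfl) y).trans (by rw [(hf y).2, hred]))

theorem mem_sylowCandidateGn_iff {C : Subgroup (Perm (ZMod p))} {φ : ZMod p → (ZMod p)ˣ}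
    {σ : polyPermGroup p n} :
    σ ∈ sylowCandidateGn p n C φ ↔ toUnitsWreath hn σ ∈ UnitsWreath.twistedSubgroup C φ := by
  simp only [UnitsWreath.mem_twistedSubgroup, toUnitsWreath_right, toUnitsWreath_left_reduction]
  constructor
  · rintro ⟨f, hf, c, hc, hfc, hf'⟩
    obtain rfl : reduction hn σ = c :=
      Equiv.ext fun x => (reduction_apply hn hf x).trans (hfc x)
    exact ⟨hc, fun y => Units.ext ((derivUnit_val hn hf y).trans (hf' y))⟩
  · rintro ⟨hc, hder⟩
    refine ⟨rep σ, apply_eq_aeval_rep σ, reduction hn σ, hc,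
      fun x => (reduction_apply hn (apply_eq_aeval_rep σ) x).symm, fun x => ?_⟩
    rw [← derivUnit_val hn (apply_eq_aeval_rep σ), hder]

theorem coe_comap_toUnitsWreath_twistedSubgroup (C : Subgroup (Perm (ZMod p)))
    (φ : ZMod p → (ZMod p)ˣ) :
    ((UnitsWreath.twistedSubgroup C φ).comap (toUnitsWreath hn) : Set (polyPermGroup p n)) =
      sylowCandidateGn p n C φ :=
  Set.ext fun _ => (mem_sylowCandidateGn_iff hn).symm

theorem natCast_dvd_aeval_rep_sub_of_mem_ker {σ : polyPermGroup p n}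
    (hσ : σ ∈ (toUnitsWreath hn).ker) (x : ZMod (p ^ n)) :
    (p : ZMod (p ^ n)) ∣ aeval x (rep σ) - x ∧
      (p : ZMod (p ^ n)) ∣ aeval x (derivative (rep σ)) - 1 := by
  rw [MonoidHom.mem_ker] at hσ
  have hred : reduction hn σ = 1 := congrArg SemidirectProduct.right hσ
  have hder : ∀ y, derivUnit hn σ y = 1 := fun y => by
    simpa [toUnitsWreath_left_reduction] using
      congrFun (congrArg SemidirectProduct.left hσ) (reduction hn σ y)
  set π := ZMod.castHom (dvd_pow_self p (by omega : n ≠ 0)) (ZMod p)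
  have hπ : ∀ g : ℤ[X], π (aeval x g) = aeval (π x) g := fun g =>
    (aeval_algHom_apply π.toIntAlgHom x g).symm
  constructor <;> apply ZMod.natCast_dvd_of_castHom_eq_zero <;> rw [map_sub, hπ, sub_eq_zero]
  · rw [← reduction_apply hn (apply_eq_aeval_rep σ), hred, Perm.one_apply]
  · rw [map_one, ← derivUnit_val hn (apply_eq_aeval_rep σ), hder, Units.val_one]

theorem pow_succ_dvd_pow_prime_apply_sub {σ : polyPermGroup p n}
    (hσ : σ ∈ (toUnitsWreath hn).ker) {k : ℕ} (hk : 1 ≤ k)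
    (h : ∀ x, (p : ZMod (p ^ n)) ^ k ∣ (σ : Perm (ZMod (p ^ n))) x - x) (x : ZMod (p ^ n)) :
    (p : ZMod (p ^ n)) ^ (k + 1) ∣ ((σ ^ p : polyPermGroup p n) : Perm (ZMod (p ^ n))) x - x := by
  set g := (rep σ).map (algebraMap ℤ (ZMod (p ^ n)))
  have hσg : ⇑(σ : Perm (ZMod (p ^ n))) = fun y => g.eval y :=
    funext fun y => by rw [apply_eq_aeval_rep, eval_map_algebraMap]
  rw [Subgroup.coe_pow, Equiv.Perm.coe_pow, hσg]
  refine pow_succ_dvd_iterate_eval_sub_self p hk (fun y => ?_) (fun y => ?_) x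
  · simpa [hσg] using h y
  · rw [derivative_map, eval_map_algebraMap]
    exact (natCast_dvd_aeval_rep_sub_of_mem_ker hn hσ y).2

theorem isPGroup_ker_toUnitsWreath : IsPGroup p (toUnitsWreath (p := p) hn).ker := by
  rintro ⟨σ, hσ⟩
  have hpow : ∀ j : ℕ, σ ^ p ^ j ∈ (toUnitsWreath hn).ker ∧ ∀ x,
      (p : ZMod (p ^ n)) ^ (j + 1) ∣
        ((σ ^ p ^ j : polyPermGroup p n) : Perm (ZMod (p ^ n))) x - x := by
    intro j
    induction j with
    | zero =>
      simpa [apply_eq_aeval_rep] using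
        ⟨hσ, fun x => (natCast_dvd_aeval_rep_sub_of_mem_ker hn hσ x).1⟩
    | succ j ih =>
      rw [pow_succ, pow_mul]
      exact ⟨Subgroup.pow_mem _ ih.1 p, pow_succ_dvd_pow_prime_apply_sub hn ih.1 (by omega) ih.2⟩
  refine ⟨n - 1, Subtype.ext (Subtype.ext (Equiv.ext fun x => ?_))⟩
  have := (hpow (n - 1)).2 x
  rw [Nat.sub_add_cancel (by omega : 1 ≤ n), ← Nat.cast_pow, ZMod.natCast_self, zero_dvd_iff,
    sub_eq_zero] at this
  simpa using this

end polyPermGroup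

/-- For `n ≥ 2`: for every cyclic subgroup `C` of order `p` of `Sym(ℤ/pℤ)` and
every `φ : ℤ/pℤ → ℤ/pℤ∖{0}`, the set `S_{(C,φ)}` is a Sylow `p`-subgroup of
`G_n`; every Sylow `p`-subgroup of `G_n` is of this form; and
`S_{(C,φ)} = S_{(D,ψ)}` if and only if `C = D` and `φ = k·ψ` for a nonzero
constant `k`.  Hence the Sylow `p`-subgroups of `G_n` correspond bijectively
to pairs `(C, φ̄)` with `φ̄` the class of `φ` modulo nonzero constants. -/
theorem sylow_subgroups_of_Gn_description (p : ℕ) [Fact p.Prime]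
    (n : ℕ) (hn : 2 ≤ n) :
    (∀ (C : Subgroup (Equiv.Perm (ZMod p))) (φ : ZMod p → (ZMod p)ˣ),
      Nat.card C = p →
        ∃ P : Sylow p (polyPermGroup p n),
          ((P : Subgroup (polyPermGroup p n)) : Set (polyPermGroup p n)) =
            sylowCandidateGn p n C φ) ∧
    (∀ P : Sylow p (polyPermGroup p n),
      ∃ (C : Subgroup (Equiv.Perm (ZMod p))) (φ : ZMod p → (ZMod p)ˣ),
        Nat.card C = p ∧
        ((P : Subgroup (polyPermGroup p n)) : Set (polyPermGroup p n)) =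
          sylowCandidateGn p n C φ) ∧
    (∀ (C D : Subgroup (Equiv.Perm (ZMod p))) (φ ψ : ZMod p → (ZMod p)ˣ),
      Nat.card C = p → Nat.card D = p →
        (sylowCandidateGn p n C φ = sylowCandidateGn p n D ψ ↔
          C = D ∧ ∃ k : (ZMod p)ˣ, ∀ x : ZMod p, φ x = k * ψ x)) := by
  open polyPermGroup UnitsWreath in
  have hsurj := toUnitsWreath_surjective (p := p) hn
  have hker := isPGroup_ker_toUnitsWreath (p := p) hn
  have hcomap := coe_comap_toUnitsWreath_twistedSubgroup (p := p) hn
  refine ⟨fun C φ hC => ?_, fun P => ?_, fun C D φ ψ hC _ => ?_⟩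
  · refine ⟨(sylowTwisted hC φ).comapOfKerIsPGroup _ hker
      (by rw [MonoidHom.range_eq_top.mpr hsurj]; exact le_top), ?_⟩
    rw [Sylow.coe_comapOfKerIsPGroup]
    exact hcomap C φ
  · obtain ⟨C, φ, hC, hP⟩ := exists_twistedSubgroup_eq (P.mapSurjective hsurj)
    refine ⟨C, φ, hC, ?_⟩
    rw [← hcomap, ← hP, Sylow.coe_mapSurjective, Subgroup.comap_map_eq,
      sup_eq_left.mpr (hker.le_sylow_of_normal P)]
  · rw [← hcomap, ← hcomap, SetLike.coe_set_eq, (Subgroup.comap_injective hsurj).eq_iff,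
      twistedSubgroup_eq_iff hC]
end
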